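/- arXiv:2206.12895 — 4 statements merged into one kernel-verified Lean document; each statement's English description precedes it below -/
import Mathlib

section
/- Let T be a rooted tree where each leaf is a data point, and for a node v at level h_v let N_v be the number of leaves in the subtree T(v). Consider the 1-median problem on the leaves of a subtree rooted at v under the 2-HST metric (edge from level i to level i-1 has weight 2^(i-1)). If the greedy algorithm that descends from v by always moving to the child with the largest leaf-count outputs leaf c, then the cost Σ_{y leaf of T(v)} d_T(c, y) is at most twice the optimal 1-median cost min_{x leaf of T(v)} Σ_{y leaf of T(v)} d_T(x, y). -/
open Finset
open scoped BigOperators Classical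

/-- The level of the lowest common ancestor of leaves `x` and `y` in a tree
whose nodes are encoded by the ancestor function `anc` (`anc x i` is the
ancestor of leaf `x` at level `i`). -/
noncomputable def lcaLevel {U V : Type} (anc : U → ℕ → V) (x y : U) : ℕ :=
  sInf {i | anc x i = anc y i}

/-- The 2-HST tree distance between leaves `x` and `y`: the edge between levels
`i` and `i-1` has weight `2^(i-1)`, so the distance is
`2·∑_{j=1}^{lca} 2^(j-1) = 2·(2^lca - 1)`. -/
noncomputable def dT {U V : Type} (anc : U → ℕ → V) (x y : U) : ℝ :=
  2 * (2 ^ lcaLevel anc x y - 1)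

/-- The number of leaves in the subtree rooted at node `v` of level `i`. -/
noncomputable def cnt {U V : Type} [Fintype U] (anc : U → ℕ → V) (i : ℕ) (v : V) : ℕ :=
  (Finset.univ.filter fun x => anc x i = v).card

/-- Greedy leaf search on a 2-HST is a 2-approximation for the 1-median problem
on the leaves of the subtree rooted at `v` (at level `m`): if the leaf `c` is
obtained by repeatedly descending to the child with the largest leaf count,
then its 1-median cost on the leaves of `T(v)` is at most twice that of any
other leaf of `T(v)`. -/
theorem greedy_leaf_search_two_approx {U V : Type} [Fintype U]
    (anc : U → ℕ → V) (L : ℕ)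
    (hroot : ∀ x y : U, anc x L = anc y L)
    (hchain : ∀ (x y : U) (i j : ℕ), i ≤ j → anc x i = anc y i → anc x j = anc y j)
    (hleaf : ∀ x y : U, anc x 0 = anc y 0 → x = y)
    (m : ℕ) (hm : m ≤ L) (v : V) (c : U) (hc : anc c m = v)
    (hgreedy : ∀ j < m, ∀ x : U, anc x (j + 1) = anc c (j + 1) →
      cnt anc j (anc x j) ≤ cnt anc j (anc c j)) :
    ∀ x : U, anc x m = v →
      ∑ y ∈ Finset.univ.filter (fun y => anc y m = v), dT anc c y
        ≤ 2 * ∑ y ∈ Finset.univ.filter (fun y => anc y m = v), dT anc x y := by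
  classical
  intro x hx
  set S : Finset U := Finset.univ.filter (fun y => anc y m = v) with hSdef
  -- lca characterization
  have hmem : ∀ a b : U, anc a (lcaLevel anc a b) = anc b (lcaLevel anc a b) := by
    intro a b
    have : (lcaLevel anc a b) ∈ {i | anc a i = anc b i} :=
      Nat.sInf_mem ⟨L, hroot a b⟩
    exact this
  have hiff : ∀ (a b : U) (j : ℕ), anc a j = anc b j ↔ lcaLevel anc a b ≤ j := by
    intro a b j
    constructor
    · intro h; exact Nat.sInf_le h
    · intro h; exact hchain a b _ j h (hmem a b)
  have hle : ∀ a b : U, anc a m = v → anc b m = v → lcaLevel anc a b ≤ m := by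
    intro a b ha hb; exact Nat.sInf_le (by simp [ha, hb])
  -- dT as a sum over levels
  have hdT : ∀ a b : U, lcaLevel anc a b ≤ m →
      dT anc a b = ∑ j ∈ Finset.range m, (if anc a j = anc b j then (0:ℝ) else 2 * 2 ^ j) := by
    intro a b h
    have h1 : ∀ j, (if anc a j = anc b j then (0:ℝ) else 2 * 2 ^ j)
        = (if j < lcaLevel anc a b then (2 * 2 ^ j : ℝ) else 0) := by
      intro j
      by_cases hj : anc a j = anc b j
      · rw [if_pos hj, if_neg]
        exact not_lt.2 ((hiff a b j).1 hj)
      · rw [if_neg hj, if_pos]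
        exact lt_of_not_ge (fun hcon => hj ((hiff a b j).2 hcon))
    rw [Finset.sum_congr rfl (fun j _ => h1 j), ← Finset.sum_filter]
    have h2 : (Finset.range m).filter (fun j => j < lcaLevel anc a b)
        = Finset.range (lcaLevel anc a b) := by
      ext j; simp only [Finset.mem_filter, Finset.mem_range]; omega
    rw [h2, ← Finset.mul_sum, geom_sum_eq (by norm_num : (2:ℝ) ≠ 1)]
    simp [dT]
    norm_num
  -- subtree filter identity
  have hfilter : ∀ (j : ℕ) (a : U), j ≤ m → anc a m = v →
      S.filter (fun y => anc y j = anc a j)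
        = Finset.univ.filter (fun y => anc y j = anc a j) := by
    intro j a hj ha
    ext y
    simp only [hSdef, Finset.mem_filter, Finset.mem_univ, true_and, and_iff_right_iff_imp]
    intro h
    exact (hchain y a j m hj h).trans ha
  have hcntle : ∀ (j : ℕ) (a : U), j ≤ m → anc a m = v →
      cnt anc j (anc a j) ≤ S.card := by
    intro j a hj ha
    rw [cnt, ← hfilter j a hj ha]
    exact Finset.card_filter_le _ _
  -- cost rewrite
  have hcost : ∀ a : U, anc a m = v →
      ∑ y ∈ S, dT anc a y
        = ∑ j ∈ Finset.range m, (2 * 2 ^ j : ℝ) * ((S.card : ℝ) - cnt anc j (anc a j)) := by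
    intro a ha
    have : ∀ y ∈ S, dT anc a y
        = ∑ j ∈ Finset.range m, (if anc a j = anc y j then (0:ℝ) else 2 * 2 ^ j) := by
      intro y hy
      apply hdT
      exact hle a y ha (by simpa [hSdef] using hy)
    rw [Finset.sum_congr rfl this, Finset.sum_comm]
    apply Finset.sum_congr rfl
    intro j hj
    have hjm : j ≤ m := le_of_lt (Finset.mem_range.1 hj)
    rw [Finset.sum_ite, Finset.sum_const_zero, zero_add, Finset.sum_const, nsmul_eq_mul]
    have hcard : (S.filter (fun y => ¬ anc a j = anc y j)).card
        = S.card - cnt anc j (anc a j) := by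
      have heqc : (S.filter (fun y => anc a j = anc y j)).card = cnt anc j (anc a j) := by
        rw [cnt, ← hfilter j a hjm ha]
        congr 1
        ext y
        simp [eq_comm]
      have := Finset.card_filter_add_card_filter_not
        (s := S) (p := fun y => anc a j = anc y j)
      omega
    rw [hcard]
    have hle' : cnt anc j (anc a j) ≤ S.card := hcntle j a hjm ha
    rw [Nat.cast_sub hle']
    ring
  -- per-level key inequality
  have hkey : ∀ j < m, ((S.card : ℝ) - cnt anc j (anc c j))
      ≤ 2 * ((S.card : ℝ) - cnt anc j (anc x j)) := by
    intro j hjm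
    set ℓ := lcaLevel anc c x with hl
    have hlm : ℓ ≤ m := hle c x hc hx
    by_cases hcase : ℓ ≤ j
    · have : anc c j = anc x j := (hiff c x j).2 hcase
      rw [this]
      have := hcntle j x (le_of_lt hjm) hx
      have : (cnt anc j (anc x j) : ℝ) ≤ S.card := by exact_mod_cast this
      linarith
    · -- j < ℓ
      push_neg at hcase
      have hl1 : 1 ≤ ℓ := by omega
      set k := ℓ - 1 with hk
      have hkm : k < m := by omega
      have hjk : j ≤ k := by omega
      have hsib : anc x (k + 1) = anc c (k + 1) := by
        have : anc c (k+1) = anc x (k+1) := (hiff c x (k+1)).2 (by omega)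
        exact this.symm
      have hg : cnt anc k (anc x k) ≤ cnt anc k (anc c k) :=
        hgreedy k hkm x hsib
      have hne : anc x k ≠ anc c k := by
        intro h
        have : ℓ ≤ k := (hiff c x k).1 h.symm
        omega
      -- disjoint classes within S
      have hsum : cnt anc k (anc x k) + cnt anc k (anc c k) ≤ S.card := by
        have hA := hfilter k x (le_of_lt hkm) hx
        have hB := hfilter k c (le_of_lt hkm) hc
        rw [cnt, cnt, ← hA, ← hB, ← Finset.card_union_of_disjoint]
        · exact Finset.card_le_card (Finset.union_subset (Finset.filter_subset _ _)
            (Finset.filter_subset _ _))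
        · rw [Finset.disjoint_left]
          intro y hy1 hy2
          simp only [Finset.mem_filter] at hy1 hy2
          exact hne (hy1.2 ▸ hy2.2 ▸ rfl)
      -- monotonicity
      have hmono : cnt anc j (anc x j) ≤ cnt anc k (anc x k) := by
        rw [cnt, cnt]
        apply Finset.card_le_card
        intro y hy
        simp only [Finset.mem_filter, Finset.mem_univ, true_and] at hy ⊢
        exact hchain y x j k hjk hy
      have h2a : 2 * cnt anc j (anc x j) ≤ S.card := by omega
      have hc0 : (0:ℝ) ≤ cnt anc j (anc c j) := by positivity
      have h2a' : 2 * (cnt anc j (anc x j) : ℝ) ≤ S.card := by exact_mod_cast h2a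
      linarith
  -- conclude
  rw [hcost c hc, hcost x hx, Finset.mul_sum]
  apply Finset.sum_le_sum
  intro j hj
  have hk := hkey j (Finset.mem_range.1 hj)
  have hpos : (0:ℝ) ≤ 2 * 2 ^ j := by positivity
  nlinarith [mul_le_mul_of_nonneg_left hk hpos]
end

section
/- Let (U, ρ) be a finite metric space and F ⊆ U with |F| = k a set of centers whose k-median cost satisfies cost(F) > 5·OPT, where OPT is the optimal k-median cost over all k-subsets of U. Then there exists a single swap (x, y) with x ∈ F, y ∈ U \ F such that cost(F − {x} + {y}) ≤ cost(F) − (cost(F) − 5·OPT)/k. -/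
/-!
Arya et al.'s argument. Fix an optimal center set `G` and nearest-center assignments `a` into
`F` and `b` into `G`. A center `f ∈ F` captures `g ∈ G` if it serves more than half of the
cluster `b⁻¹ g`. Each `g` has at most one capturer, and counting shows that every `g` can be
paired with a center `s g ∈ F` that captures no other optimal center, each `f` being used at most
twice. Inside each cluster a permutation `σ` moves every point whose center does not capture the
cluster to a point with a different center. In the swap `(s g, g)` the cluster of `g` is rerouted
to `g`, and a point `v` outside it served by `s g` is rerouted to `a (σ v) ≠ s g`, at most a
detour `dist v (b v) + dist (b v) (σ v) + dist (σ v) (a (σ v))` away. Summed over the `k` swaps,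
the cluster terms give `OPT - cost F` and the detours, each counted at most twice, at most
`4 OPT`; so some swap changes the cost by at most `(5 OPT - cost F) / k < 0`, which also forces
`g ∉ F`.
-/

open Finset

namespace LocalSearch

theorem exists_perm_apply_ne_of_two_mul_card_le {α β : Type*} [Fintype α] [DecidableEq β]
    (c : α → β) :
    ∃ π : Equiv.Perm α,
      ∀ v, 2 * #{w | c w = c v} ≤ Fintype.card α → c (π v) ≠ c v := by
  classical
  let t : α → Finset α := fun v =>
    {w | 2 * #{u | c u = c v} ≤ Fintype.card α → c w ≠ c v}
  have hall : ∀ s : Finset α, #s ≤ #(s.biUnion t) := by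
    intro s
    rcases s.eq_empty_or_nonempty with rfl | ⟨v, hv⟩
    · simp
    by_cases hsmall : 2 * #{u | c u = c v} ≤ Fintype.card α ∧ ∀ u ∈ s, c u = c v
    · have hs : #s ≤ #{u | c u = c v} := card_le_card fun u hu => by simp [hsmall.2 u hu]
      have ht : #(t v) = Fintype.card α - #{u | c u = c v} := by
        rw [← card_compl]; congr 1; ext w; simp [t, hsmall.1]
      calc #s ≤ #(t v) := by omega
        _ ≤ #(s.biUnion t) := card_le_card (subset_biUnion_of_mem t hv)
    · suffices s.biUnion t = univ from this ▸ card_le_univ s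
      refine eq_univ_of_forall fun w => mem_biUnion.2 ?_
      simp only [not_and_or, not_forall, exists_prop] at hsmall
      rcases hsmall with hbig | ⟨u, hu, hcu⟩
      · exact ⟨v, hv, by simp [t, hbig]⟩
      · by_cases hw : c w = c v
        · exact ⟨u, hu, by simp [t, hw, Ne.symm hcu]⟩
        · exact ⟨v, hv, by simp [t, hw]⟩
  obtain ⟨f, hf, hft⟩ := (all_card_le_biUnion_card_iff_exists_injective t).1 hall
  exact ⟨Equiv.ofBijective f hf.bijective_of_finite, fun v hv => by simpa [t, hv] using hft v⟩

def Captures {α β ι : Type*} [Fintype α] [DecidableEq β] [DecidableEq ι]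
    (a : α → β) (b : α → ι) (f : β) (g : ι) : Prop :=
  #{v | b v = g} < 2 * #{v | b v = g ∧ a v = f}

theorem Captures.unique {α β ι : Type*} [Fintype α] [DecidableEq β] [DecidableEq ι]
    {a : α → β} {b : α → ι} {f₁ f₂ : β} {g : ι} (h₁ : Captures a b f₁ g)
    (h₂ : Captures a b f₂ g) : f₁ = f₂ := by
  classical
  unfold Captures at h₁ h₂
  by_contra hne
  set S₁ : Finset α := {v | b v = g ∧ a v = f₁}
  set S₂ : Finset α := {v | b v = g ∧ a v = f₂}
  have hdisj : Disjoint S₁ S₂ :=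
    disjoint_filter.2 fun v _ h₁ h₂ => hne (h₁.2.symm.trans h₂.2)
  have hsub : S₁ ∪ S₂ ⊆ ({v | b v = g} : Finset α) := by
    intro v; simp only [S₁, S₂, mem_union, mem_filter, mem_univ, true_and]; tauto
  have := card_le_card hsub
  rw [card_union_of_disjoint hdisj] at this
  omega

theorem exists_perm_fiberwise_apply_ne {α β ι : Type*} [Fintype α] [DecidableEq β]
    [DecidableEq ι] (a : α → β) (b : α → ι) :
    ∃ π : Equiv.Perm α, (∀ v, b (π v) = b v) ∧
      ∀ v, ¬ Captures a b (a v) (b v) → a (π v) ≠ a v := by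
  choose π hπ using fun i =>
    exists_perm_apply_ne_of_two_mul_card_le fun w : {x // b x = i} => a w
  refine ⟨(Equiv.sigmaFiberEquiv b).permCongr (Equiv.sigmaCongrRight π), fun v => (π _ _).2,
    fun v hv => hπ (b v) ⟨v, rfl⟩ ?_⟩
  have hcard : #{w : {x // b x = b v} | a w = a v} = #{x | b x = b v ∧ a x = a v} := by
    rw [← Fintype.card_subtype (fun w : {x // b x = b v} => a w = a v),
      ← Fintype.card_subtype (fun x => b x = b v ∧ a x = a v)]
    exact Fintype.card_congr
      (Equiv.subtypeSubtypeEquivSubtypeInter (fun x => b x = b v) (fun x => a x = a v))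
  rw [hcard, Fintype.card_subtype]
  exact not_lt.1 hv

theorem exists_mapsTo_card_fiber_le {α β : Type*} [DecidableEq β] [Nonempty β]
    {A : Finset α} {B : Finset β} {n : ℕ} (h : #A ≤ n * #B) :
    ∃ e : α → β, (∀ x ∈ A, e x ∈ B) ∧ ∀ y, #{x ∈ A | e x = y} ≤ n := by
  classical
  obtain ⟨ι⟩ : Nonempty (A ↪ (B ×ˢ range n : Finset (β × ℕ))) :=
    Function.Embedding.nonempty_of_card_le (by simpa [card_product, mul_comm] using h)
  let ι' : α → β × ℕ := fun x =>
    if hx : x ∈ A then ι ⟨x, hx⟩ else (Classical.arbitrary β, 0)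
  have hι' : ∀ x ∈ A, ι' x ∈ B ×ˢ range n := fun x hx => by
    simp only [ι', dif_pos hx]; exact (ι _).2
  have hinj : Set.InjOn ι' A := fun x hx x' hx' hxx' => by
    simp only [ι', dif_pos (mem_coe.1 hx), dif_pos (mem_coe.1 hx')] at hxx'
    simpa using ι.injective (Subtype.ext hxx')
  refine ⟨fun x => (ι' x).1, fun x hx => (mem_product.1 (hι' x hx)).1, fun y => ?_⟩
  calc #{x ∈ A | (ι' x).1 = y} ≤ #(range n) :=
        card_le_card_of_injOn (fun x => (ι' x).2)
          (fun x hx => (mem_product.1 (hι' x (mem_filter.1 hx).1)).2)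
          (fun x hx x' hx' hxx' => hinj (mem_filter.1 hx).1 (mem_filter.1 hx').1
            (Prod.ext ((mem_filter.1 hx).2.trans (mem_filter.1 hx').2.symm) hxx'))
    _ = n := card_range n

theorem card_le_two_mul_card_filter_add_card {β ι : Type*} [DecidableEq ι]
    {F : Finset β} {G : Finset ι} {capt : β → Finset ι}
    (hdisj : (F : Set β).PairwiseDisjoint capt) (hcapt : ∀ f ∈ F, capt f ⊆ G)
    (hGF : #G ≤ #F) :
    #G ≤ 2 * #{f ∈ F | capt f = ∅} + #{g ∈ G | ∃ f ∈ F, capt f = {g}} := by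
  have hsum : ∑ f ∈ F, #(capt f) ≤ #G := by
    rw [← card_biUnion hdisj]; exact card_le_card (biUnion_subset.2 hcapt)
  have hsingle : #{f ∈ F | #(capt f) = 1} ≤ #{g ∈ G | ∃ f ∈ F, capt f = {g}} := by
    have hsub : ({f ∈ F | #(capt f) = 1} : Finset β).biUnion capt ⊆
        {g ∈ G | ∃ f ∈ F, capt f = {g}} := biUnion_subset.2 fun f hf g hg => by
      obtain ⟨hfF, hf1⟩ := mem_filter.1 hf
      obtain ⟨g₀, hg₀⟩ := card_eq_one.1 hf1
      rw [hg₀, mem_singleton] at hg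
      subst hg
      exact mem_filter.2 ⟨hcapt f hfF (hg₀ ▸ mem_singleton_self g), f, hfF, hg₀⟩
    calc #{f ∈ F | #(capt f) = 1} = ∑ f ∈ F with #(capt f) = 1, #(capt f) := by
          rw [card_eq_sum_ones]; exact sum_congr rfl fun f hf => (mem_filter.1 hf).2.symm
      _ = #(({f ∈ F | #(capt f) = 1} : Finset β).biUnion capt) :=
          (card_biUnion (hdisj.subset (filter_subset _ _))).symm
      _ ≤ _ := card_le_card hsub
  -- `2 ≤ 2 [capt f = ∅] + [#(capt f) = 1] + #(capt f)` for every `f`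
  have hcount : 2 * #F ≤ 2 * #{f ∈ F | capt f = ∅} + #{f ∈ F | #(capt f) = 1} +
      ∑ f ∈ F, #(capt f) := by
    simp only [card_filter, mul_sum, ← sum_add_distrib, card_eq_sum_ones F]
    refine sum_le_sum fun f _ => ?_
    rcases Nat.lt_or_ge #(capt f) 2 with h | h
    · interval_cases h' : #(capt f) <;> simp_all
    · omega
  omega

theorem exists_swap_assignment {β ι : Type*} [DecidableEq β] [DecidableEq ι] [Nonempty β]
    {F : Finset β} {G : Finset ι} {capt : β → Finset ι}
    (hdisj : (F : Set β).PairwiseDisjoint capt) (hcapt : ∀ f ∈ F, capt f ⊆ G)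
    (hGF : #G ≤ #F) :
    ∃ s : ι → β, (∀ g ∈ G, s g ∈ F ∧ capt (s g) ⊆ {g}) ∧
      ∀ f, #{g ∈ G | s g = f} ≤ 2 := by
  let D : Finset ι := {g ∈ G | ∃ f ∈ F, capt f = {g}}
  have hGD : #(G \ D) = #G - #D := card_sdiff_of_subset (filter_subset _ _)
  obtain ⟨e, he, he2⟩ := exists_mapsTo_card_fiber_le (A := G \ D)
    (B := {f ∈ F | capt f = ∅}) (n := 2) <| by
      have := card_le_two_mul_card_filter_add_card hdisj hcapt hGF
      change #G ≤ _ + #D at this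
      omega
  -- a center capturing exactly `g` serves `g`; the others go to centers capturing nothing
  let s : ι → β := fun g => if h : ∃ f ∈ F, capt f = {g} then h.choose else e g
  have hs : ∀ g ∈ G, s g ∈ F ∧ capt (s g) ⊆ {g} := fun g hg => by
    by_cases h : ∃ f ∈ F, capt f = {g}
    · simp only [s, dif_pos h]; exact ⟨h.choose_spec.1, h.choose_spec.2.le⟩
    · have := mem_filter.1 (he g (mem_sdiff.2 ⟨hg, fun hD => h (mem_filter.1 hD).2⟩))
      simp only [s, dif_neg h, this.2]; exact ⟨this.1, empty_subset _⟩
  refine ⟨s, hs, fun f => ?_⟩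
  by_cases hf : ∃ g₀, capt f = {g₀}
  · obtain ⟨g₀, hg₀⟩ := hf
    have hfib : ∀ g ∈ ({g ∈ G | s g = f} : Finset ι), g = g₀ := fun g hg => by
      obtain ⟨hgG, hsg⟩ := mem_filter.1 hg
      have := (hs g hgG).2
      rw [hsg, hg₀, singleton_subset_singleton] at this
      exact this.symm
    exact (card_le_one.2 fun g hg g' hg' => (hfib g hg).trans (hfib g' hg').symm).trans
      one_le_two
  · refine (card_le_card fun g hg => ?_).trans (he2 f)
    obtain ⟨hgG, hsg⟩ := mem_filter.1 hg
    by_cases h : ∃ f ∈ F, capt f = {g}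
    · simp only [s, dif_pos h] at hsg
      exact absurd ⟨g, hsg ▸ h.choose_spec.2⟩ hf
    · simp only [s, dif_neg h] at hsg
      exact mem_filter.2 ⟨mem_sdiff.2 ⟨hgG, fun hD => h (mem_filter.1 hD).2⟩, hsg⟩

theorem sum_comp_le_mul_sum {ι β : Type*} [DecidableEq β] {G : Finset ι} {F : Finset β}
    {s : ι → β} {n : ℕ} {B : β → ℝ} (hs : ∀ g ∈ G, s g ∈ F)
    (hn : ∀ f, #{g ∈ G | s g = f} ≤ n) (hB : ∀ f ∈ F, 0 ≤ B f) :
    ∑ g ∈ G, B (s g) ≤ n * ∑ f ∈ F, B f := by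
  rw [← sum_fiberwise_of_maps_to hs, mul_sum]
  refine sum_le_sum fun f hf => ?_
  rw [sum_congr rfl fun g hg => by rw [(mem_filter.1 hg).2], sum_const, nsmul_eq_mul]
  exact mul_le_mul_of_nonneg_right (by exact_mod_cast hn f) (hB f hf)

theorem exists_le_sub_div_card_of_sum_le {ι : Type*} {G : Finset ι} (hG : G.Nonempty)
    {c : ι → ℝ} {C D : ℝ} (h : ∑ g ∈ G, c g ≤ #G * C - D) :
    ∃ g ∈ G, c g ≤ C - D / #G := by
  refine exists_le_of_sum_le hG ?_
  have hG₀ : (#G : ℝ) ≠ 0 := by exact_mod_cast hG.card_pos.ne'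
  rwa [sum_const, nsmul_eq_mul, mul_sub, mul_div_cancel₀ _ hG₀]

section Metric

variable {U : Type*} [MetricSpace U]

def detour (a b : U → U) (σ : Equiv.Perm U) (v : U) : ℝ :=
  dist v (b v) + dist (b v) (σ v) + dist (σ v) (a (σ v))

theorem dist_le_detour (a b : U → U) (σ : Equiv.Perm U) (v : U) :
    dist v (a (σ v)) ≤ detour a b σ v := by
  unfold detour
  linarith [dist_triangle v (b v) (σ v), dist_triangle v (σ v) (a (σ v))]

variable [Fintype U]

def kMedianCost (S : Finset U) (hS : S.Nonempty) : ℝ := ∑ v, S.inf' hS (dist v ·)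

theorem kMedianCost_anti {S T : Finset U} (hS : S.Nonempty) (hST : S ⊆ T) :
    kMedianCost T (hS.mono hST) ≤ kMedianCost S hS :=
  sum_le_sum fun _ _ => inf'_mono _ hST hS

theorem exists_nearest_assignment (S : Finset U) (hS : S.Nonempty) :
    ∃ a : U → U, (∀ v, a v ∈ S) ∧ (∀ v, ∀ x ∈ S, dist v (a v) ≤ dist v x) ∧
      kMedianCost S hS = ∑ v, dist v (a v) := by
  choose a ha hda using fun v => S.exists_mem_eq_inf' hS (dist v ·)
  exact ⟨a, ha, fun v x hx => hda v ▸ inf'_le _ hx, sum_congr rfl fun v _ => hda v⟩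

theorem exists_kMedianCost_eq_sInf {S : Finset U} (hS : S.Nonempty) :
    ∃ (G : Finset U) (hG : G.Nonempty), #G = #S ∧ kMedianCost G hG =
        sInf {r | ∃ (G : Finset U) (hG : G.Nonempty), #G = #S ∧ r = kMedianCost G hG} := by
  set X : Set ℝ := {r | ∃ (G : Finset U) (hG : G.Nonempty), #G = #S ∧ r = kMedianCost G hG}
  have hfin : X.Finite := by
    refine (Set.finite_range fun G : Finset U =>
      if hG : G.Nonempty then kMedianCost G hG else 0).subset ?_
    rintro r ⟨G, hG, -, rfl⟩
    exact ⟨G, dif_pos hG⟩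
  obtain ⟨G, hG, hGS, hr⟩ := Set.Nonempty.csInf_mem (s := X) ⟨_, S, hS, rfl, rfl⟩ hfin
  exact ⟨G, hG, hGS, hr.symm⟩

theorem sum_detour {a b : U → U} {σ : Equiv.Perm U} (hbσ : ∀ v, b (σ v) = b v) :
    ∑ v, detour a b σ v = 2 * ∑ v, dist v (b v) + ∑ v, dist v (a v) := by
  have h₁ : ∑ v, dist (b v) (σ v) = ∑ v, dist v (b v) := by
    rw [← Equiv.sum_comp σ fun v => dist v (b v)]
    exact sum_congr rfl fun v _ => by rw [dist_comm, hbσ]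
  simp only [detour, sum_add_distrib, h₁, Equiv.sum_comp σ fun v => dist v (a v)]
  ring

variable [DecidableEq U]

theorem kMedianCost_swap_le {F : Finset U} {a b : U → U} {σ : Equiv.Perm U} {f g : U}
    (ha : ∀ v, a v ∈ F) (hnear : ∀ v, ∀ x ∈ F, dist v (a v) ≤ dist v x)
    (hσ : ∀ v, a v = f → b v ≠ g → a (σ v) ≠ f) :
    kMedianCost (insert g (F.erase f)) (insert_nonempty g _) ≤ ∑ v, dist v (a v)
      + ∑ v with b v = g, (dist v (b v) - dist v (a v))
      + ∑ v with a v = f, (detour a b σ v - dist v (a v)) := by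
  simp only [kMedianCost, sum_filter, ← sum_add_distrib]
  refine sum_le_sum fun v _ => ?_
  have hmem : ∀ x ∈ F, x ≠ f →
      (insert g (F.erase f)).inf' (insert_nonempty g _) (dist v ·) ≤ dist v x :=
    fun x hx hxf => inf'_le _ (mem_insert_of_mem (mem_erase.2 ⟨hxf, hx⟩))
  have hdetour : dist v (a v) ≤ detour a b σ v :=
    (hnear v _ (ha _)).trans (dist_le_detour a b σ v)
  by_cases hbv : b v = g
  · have := inf'_le (fun x => dist v x) (mem_insert_self g (F.erase f))
    simp only [hbv] at this ⊢
    split_ifs <;> linarith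
  · simp only [hbv, if_false, add_zero]
    by_cases hav : a v = f
    · simp only [hav, if_true]
      have := hmem _ (ha _) (hσ v hav hbv)
      linarith [dist_le_detour a b σ v]
    · simp only [hav, if_false, add_zero]
      exact hmem _ (ha v) hav

theorem exists_swap_kMedianCost_le {F G : Finset U} (hF : F.Nonempty) (hG : G.Nonempty)
    (hGF : #G ≤ #F) :
    ∃ f ∈ F, ∃ g ∈ G, kMedianCost (insert g (F.erase f)) (insert_nonempty g _) ≤
      kMedianCost F hF - (kMedianCost F hF - 5 * kMedianCost G hG) / #G := by
  classical
  have : Nonempty U := hF.to_type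
  obtain ⟨a, ha, hnear, hcostF⟩ := exists_nearest_assignment F hF
  obtain ⟨b, hb, -, hcostG⟩ := exists_nearest_assignment G hG
  obtain ⟨σ, hbσ, hσ⟩ := exists_perm_fiberwise_apply_ne a b
  obtain ⟨s, hs, hs2⟩ := exists_swap_assignment (capt := fun f => {g ∈ G | Captures a b f g})
    (fun f₁ _ f₂ _ hne => disjoint_filter.2 fun _ _ h₁ h₂ => hne (h₁.unique h₂))
    (fun _ _ => filter_subset _ _) hGF
  let saving : U → ℝ := fun g => ∑ v with b v = g, (dist v (b v) - dist v (a v))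
  let excess : U → ℝ := fun f => ∑ v with a v = f, (detour a b σ v - dist v (a v))
  have hswap : ∀ g ∈ G, kMedianCost (insert g (F.erase (s g))) (insert_nonempty g _) ≤
      kMedianCost F hF + saving g + excess (s g) := fun g hg => by
    rw [hcostF]
    refine kMedianCost_swap_le ha hnear fun v hav hbv => ?_
    rw [← hav]
    exact hσ v fun hcap =>
      hbv (mem_singleton.1 ((hs g hg).2 (mem_filter.2 ⟨hb v, hav ▸ hcap⟩)))
  have hsaving : ∑ g ∈ G, saving g = kMedianCost G hG - kMedianCost F hF := by
    rw [sum_fiberwise_of_maps_to fun v _ => hb v, sum_sub_distrib, hcostF, hcostG]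
  have hexcess : ∑ g ∈ G, excess (s g) ≤ 4 * kMedianCost G hG := by
    refine (sum_comp_le_mul_sum (B := excess) (fun g hg => (hs g hg).1) hs2
      fun f _ => sum_nonneg fun v _ => ?_).trans_eq ?_
    · linarith [hnear v _ (ha (σ v)), dist_le_detour a b σ v]
    · rw [sum_fiberwise_of_maps_to fun v _ => ha v, sum_sub_distrib, sum_detour hbσ, hcostG]
      push_cast; ring
  suffices h : ∑ g ∈ G, kMedianCost (insert g (F.erase (s g))) (insert_nonempty g _) ≤
      #G * kMedianCost F hF - (kMedianCost F hF - 5 * kMedianCost G hG) by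
    obtain ⟨g, hg, hle⟩ := exists_le_sub_div_card_of_sum_le hG h
    exact ⟨s g, (hs g hg).1, g, hg, hle⟩
  calc ∑ g ∈ G, kMedianCost (insert g (F.erase (s g))) (insert_nonempty g _)
      ≤ ∑ g ∈ G, (kMedianCost F hF + saving g + excess (s g)) := sum_le_sum hswap
    _ ≤ #G * kMedianCost F hF - (kMedianCost F hF - 5 * kMedianCost G hG) := by
      rw [sum_add_distrib, sum_add_distrib, hsaving, sum_const, nsmul_eq_mul]
      linarith

end Metric

end LocalSearch

open LocalSearch

theorem local_search_swap_improvement_general {U : Type} [Fintype U] [DecidableEq U] [MetricSpace U]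
    (k : ℕ) (F : Finset U) (hF : F.Nonempty) (hcard : F.card = k)
    (OPT : ℝ)
    (hOPT : OPT = sInf {r : ℝ | ∃ (G : Finset U) (hG : G.Nonempty),
      G.card = k ∧ r = ∑ v : U, G.inf' hG fun f => dist v f})
    (hcost : 5 * OPT < ∑ v : U, F.inf' hF fun f => dist v f) :
    ∃ x ∈ F, ∃ y ∉ F, ∀ h' : (insert y (F.erase x)).Nonempty,
      ∑ v : U, (insert y (F.erase x)).inf' h' (fun f => dist v f)
        ≤ (∑ v : U, F.inf' hF fun f => dist v f)
          - ((∑ v : U, F.inf' hF fun f => dist v f) - 5 * OPT) / k := by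
  subst hcard
  obtain ⟨G, hG, hGF, hGopt⟩ := exists_kMedianCost_eq_sInf hF
  have hGOPT : kMedianCost G hG = OPT := hGopt.trans hOPT.symm
  obtain ⟨x, hx, y, -, hxy⟩ := exists_swap_kMedianCost_le hF hG hGF.le
  rw [hGOPT, hGF] at hxy
  have hlt : kMedianCost F hF - (kMedianCost F hF - 5 * OPT) / #F < kMedianCost F hF :=
    sub_lt_self _ (div_pos (sub_pos.2 hcost) (by exact_mod_cast hF.card_pos))
  refine ⟨x, hx, y, fun hy => ?_, fun _ => hxy⟩
  linarith [kMedianCost_anti (insert_nonempty y _) (insert_subset hy (erase_subset x F))]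

/-- Local search improvement lemma (Arya et al.): in a finite metric space, for
any center set `F` of size `k` with `cost(F) > 5·OPT`, there is a single swap
`(x, y)`, `x ∈ F`, `y ∉ F`, with
`cost(F - {x} + {y}) ≤ cost(F) - (cost(F) - 5·OPT)/k`. -/
theorem local_search_swap_improvement {U : Type} [Fintype U] [DecidableEq U] [MetricSpace U]
    (k : ℕ) (hk : 0 < k) (F : Finset U) (hF : F.Nonempty) (hcard : F.card = k)
    (OPT : ℝ)
    (hOPT : OPT = sInf {r : ℝ | ∃ (G : Finset U) (hG : G.Nonempty),
      G.card = k ∧ r = ∑ v : U, G.inf' hG fun f => dist v f})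
    (hcost : 5 * OPT < ∑ v : U, F.inf' hF fun f => dist v f) :
    ∃ x ∈ F, ∃ y ∉ F, ∀ h' : (insert y (F.erase x)).Nonempty,
      ∑ v : U, (insert y (F.erase x)).inf' h' (fun f => dist v f)
        ≤ (∑ v : U, F.inf' hF fun f => dist v f)
          - ((∑ v : U, F.inf' hF fun f => dist v f) - 5 * OPT) / k :=
  local_search_swap_improvement_general k F hF hcard OPT hOPT hcost
end

section
/- The exponential mechanism outputting o ∈ O with probability proportional to exp(ε·q(D,o)/(2·Δq)) is ε-differentially private, where Δq = sup over adjacent datasets D, D' and outputs o of |q(D,o) − q(D',o)|. -/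
open scoped BigOperators

/-- The exponential mechanism, outputting `o` with probability proportional to
`exp(ε·q(D,o)/(2·Δq))` where `Δq` bounds `|q(D,o) - q(D',o)|` over adjacent
datasets, is `ε`-differentially private. -/
theorem exponential_mechanism_DP {Data O : Type} [Fintype O]
    (adj : Data → Data → Prop) (q : Data → O → ℝ) (Δq ε : ℝ)
    (hΔ : 0 < Δq) (hε : 0 < ε)
    (hsens : ∀ D D', adj D D' → ∀ o, |q D o - q D' o| ≤ Δq) :
    ∀ D D', adj D D' → ∀ o : O,
      Real.exp (ε * q D o / (2 * Δq)) / (∑ o', Real.exp (ε * q D o' / (2 * Δq)))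
        ≤ Real.exp ε *
          (Real.exp (ε * q D' o / (2 * Δq)) /
            (∑ o', Real.exp (ε * q D' o' / (2 * Δq)))) := by
  intro D D' hadj o
  have key : ∀ x y : ℝ, |x - y| ≤ Δq →
      Real.exp (ε * x / (2 * Δq)) ≤ Real.exp (ε / 2) * Real.exp (ε * y / (2 * Δq)) := by
    intro x y h
    rw [← Real.exp_add]
    apply Real.exp_le_exp.2
    have hxy : x - y ≤ Δq := (abs_le.1 h).2
    have heq : ε / 2 + ε * y / (2 * Δq) - ε * x / (2 * Δq)
        = (Δq - (x - y)) * ε / (2 * Δq) := by field_simp; ring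
    have h2 : 0 ≤ (Δq - (x - y)) * ε / (2 * Δq) :=
      div_nonneg (mul_nonneg (by linarith) hε.le) (by positivity)
    linarith
  have hSpos : 0 < ∑ o', Real.exp (ε * q D o' / (2 * Δq)) := by
    apply Finset.sum_pos
    · intro i _; exact Real.exp_pos _
    · exact ⟨o, Finset.mem_univ o⟩
  have hS'pos : 0 < ∑ o', Real.exp (ε * q D' o' / (2 * Δq)) := by
    apply Finset.sum_pos
    · intro i _; exact Real.exp_pos _
    · exact ⟨o, Finset.mem_univ o⟩
  have hnum : Real.exp (ε * q D o / (2 * Δq)) ≤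
      Real.exp (ε / 2) * Real.exp (ε * q D' o / (2 * Δq)) :=
    key _ _ (hsens D D' hadj o)
  have hden : (∑ o', Real.exp (ε * q D' o' / (2 * Δq))) ≤
      Real.exp (ε / 2) * ∑ o', Real.exp (ε * q D o' / (2 * Δq)) := by
    rw [Finset.mul_sum]
    apply Finset.sum_le_sum
    intro i _
    exact key _ _ (by rw [abs_sub_comm]; exact hsens D D' hadj i)
  have hfinal : Real.exp (ε * q D o / (2 * Δq)) / (∑ o', Real.exp (ε * q D o' / (2 * Δq)))
      ≤ (Real.exp (ε / 2) * Real.exp (ε * q D' o / (2 * Δq))) /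
        ((∑ o', Real.exp (ε * q D' o' / (2 * Δq))) / Real.exp (ε / 2)) := by
    apply div_le_div₀ (by positivity) hnum (by positivity)
    rw [div_le_iff₀ (Real.exp_pos _)]
    linarith [hden]
  calc _ ≤ _ := hfinal
    _ = Real.exp ε * (Real.exp (ε * q D' o / (2 * Δq)) /
        (∑ o', Real.exp (ε * q D' o' / (2 * Δq)))) := by
        rw [div_div_eq_mul_div, mul_right_comm, ← Real.exp_add, add_halves, mul_div_assoc]
end

section
/- For the k-means leaf search on a 2-HST: descending greedily from subtree root v by always choosing the child with the largest leaf count yields a leaf c with Σ_{y leaf of T(v)} d_T(c,y)² ≤ 2·min_{x leaf of T(v)} Σ_{y leaf of T(v)} d_T(x,y)². -/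
open Finset
open scoped BigOperators Classical

/-- Leaf search on a 2-HST for `k`-means: descending greedily from subtree root
`v` (at level `m`) by always choosing the child with the largest leaf count
yields a leaf `c` whose 1-mean (squared-distance) cost on the leaves of `T(v)`
is at most twice the optimal. -/
theorem greedy_leaf_search_two_approx_kmeans {U V : Type} [Fintype U]
    (anc : U → ℕ → V) (L : ℕ)
    (hroot : ∀ x y : U, anc x L = anc y L)
    (hchain : ∀ (x y : U) (i j : ℕ), i ≤ j → anc x i = anc y i → anc x j = anc y j)
    (hleaf : ∀ x y : U, anc x 0 = anc y 0 → x = y)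
    (m : ℕ) (hm : m ≤ L) (v : V) (c : U) (hc : anc c m = v)
    (hgreedy : ∀ j < m, ∀ x : U, anc x (j + 1) = anc c (j + 1) →
      cnt anc j (anc x j) ≤ cnt anc j (anc c j)) :
    ∀ x : U, anc x m = v →
      ∑ y ∈ Finset.univ.filter (fun y => anc y m = v), (dT anc c y) ^ 2
        ≤ 2 * ∑ y ∈ Finset.univ.filter (fun y => anc y m = v), (dT anc x y) ^ 2 := by
  classical
  intro x hx
  set T : Finset U := Finset.univ.filter (fun y => anc y m = v) with hT
  -- basic lca facts
  have hmem : ∀ z y : U, anc z (lcaLevel anc z y) = anc y (lcaLevel anc z y) := by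
    intro z y
    have hne : {i : ℕ | anc z i = anc y i}.Nonempty := ⟨L, hroot z y⟩
    exact Nat.sInf_mem hne
  have hiff : ∀ z y : U, ∀ j : ℕ, lcaLevel anc z y ≤ j ↔ anc z j = anc y j := by
    intro z y j
    constructor
    · intro h; exact hchain z y _ j h (hmem z y)
    · intro h; exact Nat.sInf_le h
  -- weight function
  set w : ℕ → ℝ := fun j => (2 * ((2:ℝ) ^ j - 1)) ^ 2 with hw
  have hdelta : ∀ j : ℕ, 0 ≤ w (j+1) - w j := by
    intro j
    have h1 : (1:ℝ) ≤ 2 ^ j := one_le_pow₀ (by norm_num)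
    have h2 : ((2:ℝ) ^ (j+1)) = 2 * 2 ^ j := by ring
    simp only [hw]
    nlinarith
  -- cost rewriting
  have hcost : ∀ z : U, anc z m = v →
      ∑ y ∈ T, (dT anc z y) ^ 2
        = ∑ j ∈ Finset.range m, (w (j+1) - w j) *
            ((T.filter fun y => anc y j ≠ anc z j).card : ℝ) := by
    intro z hz
    have step : ∀ y ∈ T, (dT anc z y) ^ 2 = ∑ j ∈ Finset.range m,
        if anc y j ≠ anc z j then (w (j+1) - w j) else 0 := by
      intro y hy
      have hym : anc y m = v := by
        simpa [hT] using hy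
      have hl : lcaLevel anc z y ≤ m := Nat.sInf_le (show anc z m = anc y m by rw [hz, hym])
      have hcond : ∀ j : ℕ, (anc y j ≠ anc z j) ↔ lcaLevel anc z y > j := by
        intro j
        have := hiff z y j
        constructor
        · intro h
          by_contra hne
          exact h ((this.1 (by omega)).symm)
        · intro h hcontra
          have := this.2 hcontra.symm
          omega
      calc (dT anc z y) ^ 2 = w (lcaLevel anc z y) - w 0 := by
            simp [dT, hw]
        _ = ∑ j ∈ Finset.range (lcaLevel anc z y), (w (j+1) - w j) := by
            rw [Finset.sum_range_sub]
        _ = ∑ j ∈ (Finset.range m).filter (fun j => anc y j ≠ anc z j), (w (j+1) - w j) := by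
            congr 1
            ext j
            simp only [Finset.mem_range, Finset.mem_filter, hcond]
            omega
        _ = ∑ j ∈ Finset.range m, if anc y j ≠ anc z j then (w (j+1) - w j) else 0 := by
            rw [Finset.sum_filter]
    rw [Finset.sum_congr rfl step, Finset.sum_comm]
    refine Finset.sum_congr rfl fun j _ => ?_
    rw [← Finset.sum_filter, Finset.sum_const, nsmul_eq_mul, mul_comm]
  rw [hcost c hc, hcost x hx, Finset.mul_sum]
  -- key counting inequality, per level
  refine Finset.sum_le_sum fun j hj => ?_
  rw [Finset.mem_range] at hj
  -- notation
  have hkey : ((T.filter fun y => anc y j ≠ anc c j).card : ℕ)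
      ≤ 2 * (T.filter fun y => anc y j ≠ anc x j).card := by
    simp only [ne_eq]
    have hpartc := Finset.card_filter_add_card_filter_not
      (s := T) (p := fun y => anc y j = anc c j)
    have hpartx := Finset.card_filter_add_card_filter_not
      (s := T) (p := fun y => anc y j = anc x j)
    have hBc_le : (T.filter fun y => anc y j = anc c j).card ≤ T.card :=
      Finset.card_filter_le _ _
    -- it suffices: 2 * B x ≤ T.card + B c
    have hmain : 2 * (T.filter fun y => anc y j = anc x j).card
        ≤ T.card + (T.filter fun y => anc y j = anc c j).card := by
      set t := lcaLevel anc c x with ht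
      by_cases hjt : t ≤ j
      · -- same node at level j
        have heq : anc c j = anc x j := (hiff c x j).1 hjt
        have : (T.filter fun y => anc y j = anc x j)
            = (T.filter fun y => anc y j = anc c j) := by
          simp [heq]
        rw [this]
        have := Finset.card_filter_le T (fun y => anc y j = anc c j)
        omega
      · -- diverged: use greedy at level t-1
        push_neg at hjt
        have ht1 : 1 ≤ t := by omega
        have htm : t ≤ m := (hiff c x m).2 (by rw [hc, hx])
        have hne : anc c (t-1) ≠ anc x (t-1) := by
          intro hcontra
          have := (hiff c x (t-1)).2 hcontra
          omega
        have heqt : anc x ((t-1)+1) = anc c ((t-1)+1) := by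
          have h1 : (t-1)+1 = t := by omega
          rw [h1]
          exact (hmem c x).symm
        have hg := hgreedy (t-1) (by omega) x heqt
        -- cnt = card of T-filter at level t-1
        have hTfilt : ∀ z : U, anc z m = v →
            Finset.univ.filter (fun y => anc y (t-1) = anc z (t-1))
              = T.filter (fun y => anc y (t-1) = anc z (t-1)) := by
          intro z hz
          ext y
          simp only [Finset.mem_filter, Finset.mem_univ, true_and, hT]
          constructor
          · intro hy
            refine ⟨?_, hy⟩
            rw [← hz]
            exact hchain y z (t-1) m (by omega) hy
          · exact And.right
        have hcx : cnt anc (t-1) (anc x (t-1))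
            = (T.filter fun y => anc y (t-1) = anc x (t-1)).card := by
          rw [cnt, hTfilt x hx]
        have hcc : cnt anc (t-1) (anc c (t-1))
            = (T.filter fun y => anc y (t-1) = anc c (t-1)).card := by
          rw [cnt, hTfilt c hc]
        -- monotonicity: filter at level j ⊆ filter at level t-1
        have hmono : (T.filter fun y => anc y j = anc x j).card
            ≤ (T.filter fun y => anc y (t-1) = anc x (t-1)).card := by
          apply Finset.card_le_card
          intro y hy
          rw [Finset.mem_filter] at hy ⊢
          exact ⟨hy.1, hchain y x j (t-1) (by omega) hy.2⟩
        -- disjointness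
        have hdisj : Disjoint (T.filter fun y => anc y (t-1) = anc x (t-1))
            (T.filter fun y => anc y (t-1) = anc c (t-1)) := by
          rw [Finset.disjoint_filter]
          intro y _ h1 h2
          exact hne (h1.symm.trans h2).symm
        have hsum : (T.filter fun y => anc y (t-1) = anc x (t-1)).card
            + (T.filter fun y => anc y (t-1) = anc c (t-1)).card ≤ T.card := by
          rw [← Finset.card_union_of_disjoint hdisj]
          apply Finset.card_le_card
          intro y hy
          rcases Finset.mem_union.1 hy with h | h
          · exact (Finset.mem_filter.1 h).1
          · exact (Finset.mem_filter.1 h).1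
        have hxc : (T.filter fun y => anc y (t-1) = anc x (t-1)).card
            ≤ (T.filter fun y => anc y (t-1) = anc c (t-1)).card := by
          rw [← hcx, ← hcc]; exact hg
        omega
    omega
  have h2 : ((T.filter fun y => anc y j ≠ anc c j).card : ℝ)
      ≤ 2 * ((T.filter fun y => anc y j ≠ anc x j).card : ℝ) := by
    exact_mod_cast hkey
  calc (w (j+1) - w j) * ((T.filter fun y => anc y j ≠ anc c j).card : ℝ)
      ≤ (w (j+1) - w j) * (2 * ((T.filter fun y => anc y j ≠ anc x j).card : ℝ)) :=
        mul_le_mul_of_nonneg_left h2 (hdelta j)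
    _ = 2 * ((w (j+1) - w j) * ((T.filter fun y => anc y j ≠ anc x j).card : ℝ)) := by ring
end
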